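/- In the substitution game with pass budget N, if all players always pass whenever possible, then a reserve of K = N players is not sufficient for the coach to continue the game forever; hence K ≥ N + 1 reserve players are necessary. -/
import Mathlib


/-- One round of the substitution game with pass budget `N`:
the players choose a set `P ⊆ {p ∈ M | f p ≥ 1}` of passing players, then the coach
chooses `p ∈ M \ P` if `P ≠ M`, and a fresh player `p = |M|` if `P = M`.
The new configuration is `M' = M ∪ {p}` with `f' p = N`, `f'` decremented on `P \ {p}`
and unchanged elsewhere. -/
def SubStep (N : ℕ) (M : Finset ℕ) (f : ℕ → ℕ) (M' : Finset ℕ) (f' : ℕ → ℕ) : Prop :=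
  ∃ P : Finset ℕ, P ⊆ M ∧ (∀ m ∈ P, 1 ≤ f m) ∧
    ∃ p : ℕ,
      ((P ≠ M ∧ p ∈ M \ P) ∨ (P = M ∧ p = M.card)) ∧
      M' = insert p M ∧
      f' p = N ∧
      (∀ m ∈ M, m ≠ p → f' m = if m ∈ P then f m - 1 else f m)

/-- One round in which every player who can pass does pass: `P = {p ∈ M | f p ≥ 1}`. -/
def SubStepAllPass (N : ℕ) (M : Finset ℕ) (f : ℕ → ℕ) (M' : Finset ℕ) (f' : ℕ → ℕ) : Prop :=
  ∃ p : ℕ,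
    (let P := M.filter (fun m => 1 ≤ f m);
      ((P ≠ M ∧ p ∈ M \ P) ∨ (P = M ∧ p = M.card)) ∧
      M' = insert p M ∧
      f' p = N ∧
      (∀ m ∈ M, m ≠ p → f' m = if m ∈ P then f m - 1 else f m))

private lemma subStepAllPass_unpack {N : ℕ} {M : Finset ℕ} {f : ℕ → ℕ} {M' : Finset ℕ}
    {f' : ℕ → ℕ} (h : SubStepAllPass N M f M' f') :
    ∃ p : ℕ,
      ((M.filter (fun m => 1 ≤ f m) ≠ M ∧ p ∈ M \ M.filter (fun m => 1 ≤ f m)) ∨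
        (M.filter (fun m => 1 ≤ f m) = M ∧ p = M.card)) ∧
      M' = insert p M ∧
      f' p = N ∧
      (∀ m ∈ M, m ≠ p → f' m = if m ∈ M.filter (fun m => 1 ≤ f m) then f m - 1 else f m) := h

theorem reserve_N_not_sufficient (N : ℕ) (M : ℕ → Finset ℕ) (f : ℕ → ℕ → ℕ)
    (h0 : M 0 = ∅)
    (hstep : ∀ t, SubStepAllPass N (M t) (f t) (M (t + 1)) (f (t + 1))) :
    ∃ t, N < (M t).card := by
  by_contra hcon
  push_neg at hcon
  -- Invariant: M t is an initial segment and all pass counts are ≤ N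
  have hinv : ∀ t, M t = Finset.range (M t).card ∧ ∀ m ∈ M t, f t m ≤ N := by
    intro t
    induction t with
    | zero => simp [h0]
    | succ t ih =>
      obtain ⟨p, hcase, hM', hfp, hfm⟩ := subStepAllPass_unpack (hstep t)
      have hfle : ∀ m ∈ M (t+1), f (t+1) m ≤ N := by
        intro m hm
        rw [hM'] at hm
        by_cases hmp : m = p
        · subst hmp; omega
        · have hmM : m ∈ M t := by
            rcases Finset.mem_insert.1 hm with h | h
            · exact absurd h hmp
            · exact h
          rw [hfm m hmM hmp]
          have := ih.2 m hmM
          split <;> omega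
      refine ⟨?_, hfle⟩
      rcases hcase with ⟨_, hp⟩ | ⟨_, hp⟩
      · have hpM : p ∈ M t := (Finset.mem_sdiff.1 hp).1
        have hMe : M (t+1) = M t := by rw [hM', Finset.insert_eq_self.2 hpM]
        rw [hMe]; exact ih.1
      · have hpM : p ∉ M t := by
          rw [ih.1, hp]; exact Finset.notMem_range_self
        have hc : (M (t+1)).card = (M t).card + 1 := by
          rw [hM', Finset.card_insert_of_notMem hpM]
        rw [hM', Finset.card_insert_of_notMem hpM, hp, Finset.range_add_one, ← ih.1]
  -- The potential
  set Φ : ℕ → ℕ := fun t => (M t).card + ∑ m ∈ M t, f t m with hΦ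
  have hΦstep : ∀ t, Φ t + 1 ≤ Φ (t + 1) := by
    intro t
    obtain ⟨p, hcase, hM', hfp, hfm⟩ := subStepAllPass_unpack (hstep t)
    set P := (M t).filter (fun m => 1 ≤ f t m) with hPdef
    rcases hcase with ⟨hne, hp⟩ | ⟨heq, hp⟩
    · -- coach refills an existing player with 0 passes left
      have hpM : p ∈ M t := (Finset.mem_sdiff.1 hp).1
      have hpP : p ∉ P := (Finset.mem_sdiff.1 hp).2
      have hfp0 : f t p = 0 := by
        by_contra h
        exact hpP (Finset.mem_filter.2 ⟨hpM, by omega⟩)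
      have hMe : M (t+1) = M t := by rw [hM', Finset.insert_eq_self.2 hpM]
      have hPsub : P ⊆ (M t).erase p := by
        intro m hm
        exact Finset.mem_erase.2 ⟨fun h => hpP (h ▸ hm), (Finset.mem_filter.1 hm).1⟩
      -- sums over the erase set
      have hsum_erase : ∑ m ∈ (M t).erase p, f t m
          = (∑ m ∈ (M t).erase p, f (t+1) m) + P.card := by
        have h1 : ∑ m ∈ (M t).erase p, f t m
            = ∑ m ∈ (M t).erase p, (f (t+1) m + if m ∈ P then 1 else 0) := by
          apply Finset.sum_congr rfl
          intro m hm
          have hmM : m ∈ M t := Finset.mem_of_mem_erase hm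
          have hmp : m ≠ p := Finset.ne_of_mem_erase hm
          rw [hfm m hmM hmp]
          by_cases hmP : m ∈ P
          · have : 1 ≤ f t m := (Finset.mem_filter.1 hmP).2
            simp [hmP]; omega
          · simp [hmP]
        rw [h1, Finset.sum_add_distrib]
        congr 1
        rw [Finset.sum_ite_mem, Finset.inter_eq_right.2 hPsub]
        simp
      have hS : ∑ m ∈ M t, f t m = (∑ m ∈ (M t).erase p, f (t+1) m) + P.card := by
        rw [← Finset.add_sum_erase _ _ hpM, hfp0, zero_add, hsum_erase]
      have hS' : ∑ m ∈ M (t+1), f (t+1) m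
          = N + ∑ m ∈ (M t).erase p, f (t+1) m := by
        rw [hMe, ← Finset.add_sum_erase _ _ hpM, hfp]
      have hPcard : P.card + 1 ≤ N := by
        have h1 : P.card ≤ ((M t).erase p).card := Finset.card_le_card hPsub
        have h2 : ((M t).erase p).card = (M t).card - 1 :=
          Finset.card_erase_of_mem hpM
        have h3 : 1 ≤ (M t).card := Finset.card_pos.2 ⟨p, hpM⟩
        have h4 := hcon t
        omega
      have hc : (M (t+1)).card = (M t).card := by rw [hMe]
      simp only [hΦ, hc, hS, hS']
      omega
    · -- all players pass; a fresh player comes in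
      have hall : ∀ m ∈ M t, 1 ≤ f t m := by
        intro m hm
        have : m ∈ P := heq ▸ hm
        exact (Finset.mem_filter.1 this).2
      have hpM : p ∉ M t := by
        rw [(hinv t).1, hp]; exact Finset.notMem_range_self
      have hc : (M (t+1)).card = (M t).card + 1 := by
        rw [hM', Finset.card_insert_of_notMem hpM]
      have h1 : ∀ m ∈ M t, f (t+1) m = f t m - 1 := by
        intro m hm
        have hmp : m ≠ p := fun h => hpM (h ▸ hm)
        rw [hfm m hm hmp]
        simp [heq ▸ hm]
      have hsum : (∑ m ∈ M t, f (t+1) m) + (M t).card = ∑ m ∈ M t, f t m := by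
        calc (∑ m ∈ M t, f (t+1) m) + (M t).card
            = (∑ m ∈ M t, f (t+1) m) + ∑ _m ∈ M t, 1 := by
              rw [Finset.card_eq_sum_ones]
          _ = ∑ m ∈ M t, (f (t+1) m + 1) := (Finset.sum_add_distrib).symm
          _ = ∑ m ∈ M t, f t m := by
              apply Finset.sum_congr rfl
              intro m hm
              have := hall m hm
              rw [h1 m hm]; omega
      have hS' : ∑ m ∈ M (t+1), f (t+1) m = N + ∑ m ∈ M t, f (t+1) m := by
        rw [hM', Finset.sum_insert hpM, hfp]
      have h4 := hcon t
      simp only [hΦ, hc, hS']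
      omega
  -- Φ grows without bound but is bounded: contradiction
  have hΦmono : ∀ t, t ≤ Φ t := by
    intro t
    induction t with
    | zero => omega
    | succ t ih => have := hΦstep t; omega
  have hΦbd : ∀ t, Φ t ≤ N + N * N := by
    intro t
    have h1 : ∑ m ∈ M t, f t m ≤ (M t).card * N := by
      calc ∑ m ∈ M t, f t m ≤ ∑ _m ∈ M t, N :=
            Finset.sum_le_sum (fun m hm => (hinv t).2 m hm)
        _ = (M t).card * N := by rw [Finset.sum_const, smul_eq_mul]
    have h2 := hcon t
    have h3 : (M t).card * N ≤ N * N := Nat.mul_le_mul_right N h2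
    simp only [hΦ]
    omega
  have := hΦmono (N + N * N + 1)
  have := hΦbd (N + N * N + 1)
  omega
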